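/- arXiv:2203.10725 — 5 statements merged into one kernel-verified Lean document; each statement's English description precedes it below -/
import Mathlib

section
/- There exist a finite set X (one may take X to have three elements) and a pre-uniformity μ on X such that the induced pre-topology τ(μ) is not the discrete pre-topology, i.e., some subset of X is not open in τ(μ). (This contrasts with uniformities: every uniformity on a finite set induces the discrete topology.) -/
open Set

variable {X : Type*}

/-- The inverse `U⁻¹ = {(y,x) : (x,y) ∈ U}` of a relation on `X`. -/
def preInv (U : Set (X × X)) : Set (X × X) := {p | (p.2, p.1) ∈ U}

/-- The composition `U ∘ V = {(x,y) : ∃ z, (x,z) ∈ U ∧ (z,y) ∈ V}`. -/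
def preComp (U V : Set (X × X)) : Set (X × X) :=
  {p | ∃ z, (p.1, z) ∈ U ∧ (z, p.2) ∈ V}

/-- The ball `U[x] = {y : (x,y) ∈ U}`. -/
def uball (U : Set (X × X)) (x : X) : Set X := {y | (x, y) ∈ U}

/-- A pre-uniformity on `X`: a family `μ` of subsets of `X × X` satisfying (U1)-(U5). -/
structure IsPreUniformity (μ : Set (Set (X × X))) : Prop where
  diag_subset : ∀ U ∈ μ, Set.diagonal X ⊆ U
  inv_mem : ∀ U ∈ μ, preInv U ∈ μ
  comp_mem : ∀ U ∈ μ, ∃ V ∈ μ, ∃ W ∈ μ, preComp V W ⊆ U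
  superset_mem : ∀ U ∈ μ, ∀ V : Set (X × X), U ⊆ V → V ∈ μ
  sInter_eq : ⋂₀ μ = Set.diagonal X

/-- (U2'): every entourage contains a symmetric entourage. -/
def SymmetricallyPreUniform (μ : Set (Set (X × X))) : Prop :=
  ∀ U ∈ μ, ∃ V ∈ μ, V ⊆ U ∧ preInv V = V

/-- (U3'): every entourage `U` admits `V ∈ μ` with `V ∘ V ⊆ U`. -/
def StronglyPreUniform (μ : Set (Set (X × X))) : Prop :=
  ∀ U ∈ μ, ∃ V ∈ μ, preComp V V ⊆ U

/-- The pre-topology `τ(μ)` induced by a pre-uniformity `μ`. -/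
def preTop (μ : Set (Set (X × X))) : Set (Set X) :=
  {G | ∀ x ∈ G, ∃ U ∈ μ, uball U x ⊆ G}

/-- A pre-topology on `X`: a family of subsets covering `X` closed under arbitrary unions. -/
def IsPreTopology (τ : Set (Set X)) : Prop :=
  ⋃₀ τ = Set.univ ∧ ∀ S : Set (Set X), S ⊆ τ → ⋃₀ S ∈ τ

/-- Interior with respect to a pre-topology. -/
def pInterior (τ : Set (Set X)) (A : Set X) : Set X :=
  ⋃₀ {W | W ∈ τ ∧ W ⊆ A}

/-- Closure with respect to a pre-topology: the smallest closed set containing `A`. -/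
def pClosure (τ : Set (Set X)) (A : Set X) : Set X :=
  ⋂₀ {C | A ⊆ C ∧ Cᶜ ∈ τ}

/-- T1 separation for a pre-topology. -/
def IsT1 (τ : Set (Set X)) : Prop :=
  ∀ x y : X, x ≠ y → (∃ V ∈ τ, x ∈ V ∧ y ∉ V) ∧ (∃ W ∈ τ, y ∈ W ∧ x ∉ W)

/-- Complete regularity for a pre-topology: T1, and points can be separated from closed
sets by pre-continuous maps into the unit interval. -/
def IsCompletelyRegular (τ : Set (Set X)) : Prop :=
  IsT1 τ ∧ ∀ (x : X) (C : Set X), Cᶜ ∈ τ → x ∉ C →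
    ∃ f : X → unitInterval,
      (∀ O : Set unitInterval, IsOpen O → f ⁻¹' O ∈ τ) ∧
      f x = 0 ∧ ∀ y ∈ C, f y = 1

/-- A pseudometric on `X`. -/
structure IsPseudometric (ρ : X → X → ℝ) : Prop where
  refl : ∀ x, ρ x x = 0
  symm : ∀ x y, ρ x y = ρ y x
  nonneg : ∀ x y, 0 ≤ ρ x y
  triangle : ∀ x y z, ρ x z ≤ ρ x y + ρ y z

/-- A pseudometric `ρ` is pre-uniform with respect to `μ`. -/
def PreUniformPseudometric (μ : Set (Set (X × X))) (ρ : X → X → ℝ) : Prop :=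
  ∀ ε : ℝ, 0 < ε → ∃ V ∈ μ, ∀ x y : X, (x, y) ∈ V → ρ x y < ε

/-- A cover of `X` which is pre-uniform with respect to `μ`: some `{V[x] : x ∈ X}` refines it. -/
def PreUniformCover (μ : Set (Set (X × X))) (𝒜 : Set (Set X)) : Prop :=
  ⋃₀ 𝒜 = Set.univ ∧ ∃ V ∈ μ, ∀ x : X, ∃ A ∈ 𝒜, uball V x ⊆ A

/-- The star `st(A, ℬ)` of a set `A` with respect to a family `ℬ`. -/
def pStar (A : Set X) (ℬ : Set (Set X)) : Set X :=
  ⋃₀ {B | B ∈ ℬ ∧ (B ∩ A).Nonempty}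

/-- The star `st(x, 𝒜)` of a point with respect to a family `𝒜`. -/
def pStarPt (x : X) (𝒜 : Set (Set X)) : Set X :=
  ⋃₀ {A | A ∈ 𝒜 ∧ x ∈ A}

/-- The entourage `⋃ {A × A : A ∈ 𝒜}` associated with a cover `𝒜`. -/
def coverEnt (𝒜 : Set (Set X)) : Set (X × X) := ⋃ A ∈ 𝒜, A ×ˢ A

/-- The family generated by the entourages of the covers in `𝒪`. -/
def coverUnif (𝒪 : Set (Set (Set X))) : Set (Set (X × X)) :=
  {U | ∃ 𝒜 ∈ 𝒪, coverEnt 𝒜 ⊆ U}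

/-- The entourage `U_{i,ρ} = {(x,y) : ρ(x,y) < 2⁻ⁱ}` of a pseudometric. -/
def pmEnt (ρ : X → X → ℝ) (i : ℕ) : Set (X × X) :=
  {p | ρ p.1 p.2 < (1 / 2 : ℝ) ^ i}

/-- The family generated by the entourages `U_{i,ρ}`, `ρ ∈ 𝒟`, `i ∈ ℕ`. -/
def pmUnif (𝒟 : Set (X → X → ℝ)) : Set (Set (X × X)) :=
  {U | ∃ ρ ∈ 𝒟, ∃ i : ℕ, pmEnt ρ i ⊆ U}

/-- A pre-proximity on `X`: a relation `δ` on subsets of `X` satisfying (PP1)-(PP5). -/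
structure IsPreProximity (δ : Set X → Set X → Prop) : Prop where
  symm : ∀ A B, δ A B ↔ δ B A
  mono : ∀ A B C, δ A B → B ⊆ C → δ A C
  point : ∀ x y : X, δ {x} {y} ↔ x = y
  not_empty_univ : ¬ δ ∅ Set.univ
  sep : ∀ A B, ¬ δ A B → ∃ C : Set X, ¬ δ A C ∧ ¬ δ B Cᶜ

/-- The closure operator `c(A) = {x : {x} δ A}` of a pre-proximity. -/
def proxCl (δ : Set X → Set X → Prop) (A : Set X) : Set X := {x | δ {x} A}

/-- The pre-topology induced by a pre-proximity: `U` is open iff `c(X ∖ U) = X ∖ U`. -/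
def proxTop (δ : Set X → Set X → Prop) : Set (Set X) :=
  {U | proxCl δ Uᶜ = Uᶜ}

/-- `A ≪ B`, i.e. `B` is a `δ`-neighborhood of `A`: `A δ̄ (X ∖ B)`. -/
def deltaNbhd (δ : Set X → Set X → Prop) (A B : Set X) : Prop := ¬ δ A Bᶜ

/-- The pre-proximity induced by a pre-uniformity: `A δ_μ B` iff every entourage meets `A × B`. -/
def unifProx (μ : Set (Set (X × X))) (A B : Set X) : Prop :=
  ∀ V ∈ μ, (V ∩ A ×ˢ B).Nonempty

/-- The family generated by the sets `T(A,B) = (X × X) ∖ (A × B)` with `A δ̄ B`. -/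
def proxUnif (δ : Set X → Set X → Prop) : Set (Set (X × X)) :=
  {U | ∃ A B : Set X, ¬ δ A B ∧ (A ×ˢ B)ᶜ ⊆ U}

/-- A pre-uniformity is totally bounded if every entourage admits a finite dense set. -/
def TotallyBoundedPU (μ : Set (Set (X × X))) : Prop :=
  ∀ U ∈ μ, ∃ A : Set X, A.Finite ∧ ∀ x : X, ∃ y ∈ A, (x, y) ∈ U


/-- First generating entourage on `Fin 3`. -/
def Sa : Set (Fin 3 × Fin 3) :=
  {p | p.1 = p.2 ∨ (p.1 = 0 ∧ p.2 = 1) ∨ (p.1 = 1 ∧ p.2 = 0)}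

/-- Second generating entourage on `Fin 3`. -/
def Sb : Set (Fin 3 × Fin 3) :=
  {p | p.1 = p.2 ∨ (p.1 = 0 ∧ p.2 = 2) ∨ (p.1 = 2 ∧ p.2 = 0)}

/-- The pre-uniformity generated by `Sa` and `Sb`. -/
def mu3 : Set (Set (Fin 3 × Fin 3)) := {U | Sa ⊆ U ∨ Sb ⊆ U}

lemma Sa_symm : ∀ p : Fin 3 × Fin 3, p ∈ Sa → (p.2, p.1) ∈ Sa := by
  simp only [Sa, Set.mem_setOf_eq]; decide

lemma Sb_symm : ∀ p : Fin 3 × Fin 3, p ∈ Sb → (p.2, p.1) ∈ Sb := by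
  simp only [Sb, Set.mem_setOf_eq]; decide

lemma Sa_comp : ∀ a z b : Fin 3, (a, z) ∈ Sa → (z, b) ∈ Sa → (a, b) ∈ Sa := by
  simp only [Sa, Set.mem_setOf_eq]; decide

lemma Sb_comp : ∀ a z b : Fin 3, (a, z) ∈ Sb → (z, b) ∈ Sb → (a, b) ∈ Sb := by
  simp only [Sb, Set.mem_setOf_eq]; decide

lemma SaSb_diag : ∀ p : Fin 3 × Fin 3, p ∈ Sa → p ∈ Sb → p.1 = p.2 := by
  simp only [Sa, Sb, Set.mem_setOf_eq]; decide

theorem statement3 : ∃ (X : Type) (_ : Fintype X) (μ : Set (Set (X × X))),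
    IsPreUniformity μ ∧ ∃ A : Set X, A ∉ preTop μ := by
  refine ⟨Fin 3, inferInstance, mu3, ?_, {0}, ?_⟩
  · constructor
    · rintro U (hU | hU) p hp
      · exact hU (Or.inl hp)
      · exact hU (Or.inl hp)
    · rintro U (hU | hU)
      · exact Or.inl fun p hp => hU (Sa_symm _ hp)
      · exact Or.inr fun p hp => hU (Sb_symm _ hp)
    · rintro U (hU | hU)
      · refine ⟨Sa, Or.inl subset_rfl, Sa, Or.inl subset_rfl, ?_⟩
        rintro ⟨a, b⟩ ⟨z, h1, h2⟩
        exact hU (Sa_comp a z b h1 h2)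
      · refine ⟨Sb, Or.inr subset_rfl, Sb, Or.inr subset_rfl, ?_⟩
        rintro ⟨a, b⟩ ⟨z, h1, h2⟩
        exact hU (Sb_comp a z b h1 h2)
    · rintro U (hU | hU) V hUV
      · exact Or.inl (hU.trans hUV)
      · exact Or.inr (hU.trans hUV)
    · apply subset_antisymm
      · intro p hp
        exact SaSb_diag p (hp Sa (Or.inl subset_rfl)) (hp Sb (Or.inr subset_rfl))
      · rintro p hp U (hU | hU)
        · exact hU (Or.inl hp)
        · exact hU (Or.inl hp)
  · rintro h
    obtain ⟨U, hU, hball⟩ := h 0 rfl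
    rcases hU with hU | hU
    · have h1 : (1 : Fin 3) ∈ uball U 0 := hU (by simp [Sa])
      simpa using hball h1
    · have h2 : (2 : Fin 3) ∈ uball U 0 := hU (by simp [Sb])
      simpa using hball h2
end

section
/- Let μ be a symmetrically and strongly pre-uniform structure on a set X. Then for every V ∈ μ there exists a pseudometric ρ on X that is pre-uniform with respect to μ and satisfies {(x,y) : ρ(x,y) < 1} ⊆ V. -/
open Set

variable {X : Type*}

/-!
Strong and symmetric pre-uniformity give, below any `V ∈ μ`, a sequence of symmetric entourages
`U n ∈ μ` with `U (n + 1) ∘ U (n + 1) ⊆ U n`. Such a sequence is an antitone basis of a genuine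
uniform structure on `X`, which is countably generated and hence induced by a pseudometric
(`UniformSpace.metrizable_uniformity`). Every ball of that pseudometric contains some `U n ∈ μ`,
and after rescaling the unit ball lies in `U 0 ⊆ V`.
-/

open Filter Uniformity

lemma preComp_mono {U U' W W' : Set (X × X)} (hU : U ⊆ U') (hW : W ⊆ W') :
    preComp U W ⊆ preComp U' W' :=
  fun _ ⟨z, hUz, hWz⟩ => ⟨z, hU hUz, hW hWz⟩

lemma subset_preComp_self {W : Set (X × X)} (hW : diagonal X ⊆ W) : W ⊆ preComp W W :=
  fun p hp => ⟨p.2, hp, hW rfl⟩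

lemma IsPseudometric.const_mul {ρ : X → X → ℝ} (hρ : IsPseudometric ρ) {c : ℝ} (hc : 0 ≤ c) :
    IsPseudometric fun x y => c * ρ x y where
  refl x := by simp [hρ.refl]
  symm x y := by rw [hρ.symm]
  nonneg x y := mul_nonneg hc (hρ.nonneg x y)
  triangle x y z := by rw [← mul_add]; exact mul_le_mul_of_nonneg_left (hρ.triangle x y z) hc

lemma isPseudometric_dist [PseudoMetricSpace X] : IsPseudometric (dist : X → X → ℝ) :=
  ⟨dist_self, dist_comm, fun _ _ => dist_nonneg, dist_triangle⟩

structure IsHalvingChain (U : ℕ → Set (X × X)) : Prop where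
  diagonal_subset : ∀ n, diagonal X ⊆ U n
  preInv_eq : ∀ n, preInv (U n) = U n
  preComp_subset : ∀ n, preComp (U (n + 1)) (U (n + 1)) ⊆ U n

namespace IsHalvingChain

variable {U : ℕ → Set (X × X)}

lemma antitone (hU : IsHalvingChain U) : Antitone U :=
  antitone_nat_of_succ_le fun n =>
    (subset_preComp_self (hU.diagonal_subset _)).trans (hU.preComp_subset n)

lemma hasAntitoneBasis (hU : IsHalvingChain U) : (⨅ n, 𝓟 (U n)).HasAntitoneBasis U :=
  .iInf_principal hU.antitone

abbrev uniformSpace (hU : IsHalvingChain U) : UniformSpace X :=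
  .ofCore <| .mk' (⨅ n, 𝓟 (U n))
    (fun _ hr x => by
      obtain ⟨n, hn⟩ := hU.hasAntitoneBasis.mem_iff.1 hr
      exact hn (hU.diagonal_subset n rfl))
    (fun _ hr => by
      obtain ⟨n, hn⟩ := hU.hasAntitoneBasis.mem_iff.1 hr
      exact hU.hasAntitoneBasis.mem_iff.2 ⟨n, by rw [← hU.preInv_eq n]; exact fun _ h => hn h⟩)
    (fun _ hr => by
      obtain ⟨n, hn⟩ := hU.hasAntitoneBasis.mem_iff.1 hr
      exact ⟨U (n + 1), hU.hasAntitoneBasis.mem (n + 1), (hU.preComp_subset n).trans hn⟩)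

lemma exists_pseudometric (hU : IsHalvingChain U) : ∃ ρ : X → X → ℝ, IsPseudometric ρ ∧
    (∀ ε > 0, ∃ n, ∀ x y, (x, y) ∈ U n → ρ x y < ε) ∧ ∀ x y, ρ x y < 1 → (x, y) ∈ U 0 := by
  let := hU.uniformSpace
  have : IsCountablyGenerated (𝓤 X) := isCountablyGenerated_seq U
  obtain ⟨m, hm⟩ := UniformSpace.metrizable_uniformity X
  have hbasis : (@uniformity X m.toUniformSpace).HasAntitoneBasis U := hm ▸ hU.hasAntitoneBasis
  let := m
  obtain ⟨r, hr, hrU⟩ := Metric.mem_uniformity_dist.1 (hbasis.mem 0)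
  refine ⟨fun x y => r⁻¹ * dist x y, isPseudometric_dist.const_mul (inv_nonneg.2 hr.le),
    fun ε hε => ?_, fun x y hxy => hrU ?_⟩
  · obtain ⟨n, hn⟩ := hbasis.mem_iff.1 (Metric.dist_mem_uniformity (mul_pos hr hε))
    exact ⟨n, fun x y hxy => (inv_mul_lt_iff₀ hr).2 (hn hxy)⟩
  · simpa using (inv_mul_lt_iff₀ hr).1 hxy

end IsHalvingChain

section PreUniformity

variable {μ : Set (Set (X × X))}

lemma exists_symm_preComp_subset (hsym : SymmetricallyPreUniform μ) (hstr : StronglyPreUniform μ)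
    {U : Set (X × X)} (hU : U ∈ μ) : ∃ W ∈ μ, preInv W = W ∧ preComp W W ⊆ U := by
  obtain ⟨S, hSμ, hSU⟩ := hstr U hU
  obtain ⟨W, hWμ, hWS, hWsymm⟩ := hsym S hSμ
  exact ⟨W, hWμ, hWsymm, (preComp_mono hWS hWS).trans hSU⟩

lemma exists_isHalvingChain (hμ : IsPreUniformity μ) (hsym : SymmetricallyPreUniform μ)
    (hstr : StronglyPreUniform μ) {V : Set (X × X)} (hV : V ∈ μ) :
    ∃ U : ℕ → Set (X × X), IsHalvingChain U ∧ (∀ n, U n ∈ μ) ∧ U 0 ⊆ V := by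
  choose half half_mem half_symm half_comp using
    fun (W : Set (X × X)) (hW : W ∈ μ) => exists_symm_preComp_subset hsym hstr hW
  let step : μ → μ := fun W => ⟨half W W.2, half_mem W W.2⟩
  let U : ℕ → μ := fun n => step^[n + 1] ⟨V, hV⟩
  have hU_succ (n : ℕ) : U (n + 1) = step (U n) := Function.iterate_succ_apply' ..
  have hdiag (n : ℕ) : diagonal X ⊆ U n := hμ.diag_subset _ (U n).2
  refine ⟨fun n => U n, ⟨hdiag, fun n => ?_, fun n => ?_⟩, fun n => (U n).2, ?_⟩
  · cases n with
    | zero => exact half_symm _ _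
    | succ n => rw [hU_succ]; exact half_symm _ _
  · rw [hU_succ]; exact half_comp _ _
  · exact (subset_preComp_self (hdiag 0)).trans (half_comp _ _)

end PreUniformity

theorem statement6 {X : Type*} (μ : Set (Set (X × X))) (hμ : IsPreUniformity μ)
    (hsym : SymmetricallyPreUniform μ) (hstr : StronglyPreUniform μ) :
    ∀ V ∈ μ, ∃ ρ : X → X → ℝ, IsPseudometric ρ ∧ PreUniformPseudometric μ ρ ∧
      {p : X × X | ρ p.1 p.2 < 1} ⊆ V := by
  intro V hV
  obtain ⟨U, hU, hUμ, hUV⟩ := exists_isHalvingChain hμ hsym hstr hV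
  obtain ⟨ρ, hρ, hρ_small, hρ_lt_one⟩ := hU.exists_pseudometric
  refine ⟨ρ, hρ, fun ε hε => ?_, fun p hp => hUV (hρ_lt_one p.1 p.2 hp)⟩
  obtain ⟨n, hn⟩ := hρ_small ε hε
  exact ⟨U n, hUμ n, hn⟩
end

section
/- Let μ be a symmetrically and strongly pre-uniform structure on a set X. Then the induced pre-topological space (X, τ(μ)) is completely regular. -/
open Set

variable {X : Type*}

namespace Statement7Aux
section


variable {X : Type*} (V : ℕ → Set (X × X))

/-- The value set defining `g`. -/
def gSet (a b : X) : Set ℝ :=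
  insert 1 {e | ∃ n, (a, b) ∈ V n ∧ e = (1/2 : ℝ) ^ (n + 1)}

noncomputable def gfun (a b : X) : ℝ := sInf (gSet V a b)

lemma gSet_nonempty (a b : X) : (gSet V a b).Nonempty := ⟨1, Or.inl rfl⟩

lemma gSet_nonneg (a b : X) : ∀ e ∈ gSet V a b, (0:ℝ) ≤ e := by
  rintro e (rfl | ⟨n, _, rfl⟩) <;> positivity

lemma gSet_bdd (a b : X) : BddBelow (gSet V a b) := ⟨0, gSet_nonneg V a b⟩

lemma gfun_nonneg (a b : X) : 0 ≤ gfun V a b :=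
  le_csInf (gSet_nonempty V a b) (gSet_nonneg V a b)

lemma gfun_le_one (a b : X) : gfun V a b ≤ 1 :=
  csInf_le (gSet_bdd V a b) (Or.inl rfl)

lemma gfun_le_of_mem {a b : X} {n : ℕ} (h : (a, b) ∈ V n) :
    gfun V a b ≤ (1/2 : ℝ) ^ (n + 1) :=
  csInf_le (gSet_bdd V a b) (Or.inr ⟨n, h, rfl⟩)

lemma mem_of_gfun_lt (hanti : ∀ ⦃m n : ℕ⦄, n ≤ m → V m ⊆ V n) {a b : X} {n : ℕ}
    (h : gfun V a b < (1/2 : ℝ) ^ (n + 1)) : (a, b) ∈ V (n + 1) := by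
  obtain ⟨e, he, hlt⟩ := exists_lt_of_csInf_lt (gSet_nonempty V a b) h
  rcases he with rfl | ⟨m, hm, rfl⟩
  · exfalso
    have : (1/2 : ℝ) ^ (n+1) ≤ 1 := pow_le_one₀ (by norm_num) (by norm_num)
    linarith
  · have hmn : n + 1 ≤ m := by
      by_contra hc
      have : (1/2 : ℝ) ^ (n+1) ≤ (1/2 : ℝ) ^ (m+1) :=
        pow_le_pow_of_le_one (by norm_num) (by norm_num) (by omega)
      linarith
    exact hanti hmn hm

lemma gfun_self (hdiag : ∀ n, Set.diagonal X ⊆ V n) (a : X) : gfun V a a = 0 := by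
  refine le_antisymm ?_ (gfun_nonneg V a a)
  by_contra hc
  push_neg at hc
  obtain ⟨n, hn⟩ := exists_pow_lt_of_lt_one hc (by norm_num : (1/2:ℝ) < 1)
  have h1 : gfun V a a ≤ (1/2:ℝ) ^ (n+1) := gfun_le_of_mem V (hdiag n rfl)
  have h2 : (1/2:ℝ) ^ (n+1) ≤ (1/2:ℝ) ^ n :=
    pow_le_pow_of_le_one (by norm_num) (by norm_num) (by omega)
  linarith

lemma gfun_symm (hsymV : ∀ n, preInv (V n) = V n) (a b : X) :
    gfun V a b = gfun V b a := by
  have hiff : ∀ n (a b : X), (a, b) ∈ V n ↔ (b, a) ∈ V n := by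
    intro n a b
    conv_lhs => rw [← hsymV n]
    exact Iff.rfl
  unfold gfun gSet
  congr 1
  ext e
  simp only [Set.mem_insert_iff, Set.mem_setOf_eq]
  constructor <;> rintro (rfl | ⟨n, hm, rfl⟩)
  · exact Or.inl rfl
  · exact Or.inr ⟨n, (hiff n a b).1 hm, rfl⟩
  · exact Or.inl rfl
  · exact Or.inr ⟨n, (hiff n b a).1 hm, rfl⟩

lemma gfun_eq_one {a b : X} (h : ∀ n, (a, b) ∉ V n) : gfun V a b = 1 := by
  have : gSet V a b = {1} := by
    ext e
    constructor
    · rintro (rfl | ⟨n, hm, rfl⟩)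
      · rfl
      · exact absurd hm (h n)
    · rintro rfl; exact Or.inl rfl
  rw [gfun, this, csInf_singleton]

noncomputable def chainSum (z : ℕ → X) (k : ℕ) : ℝ :=
  ∑ i ∈ Finset.range k, gfun V (z i) (z (i + 1))

lemma chainSum_nonneg (z : ℕ → X) (k : ℕ) : 0 ≤ chainSum V z k :=
  Finset.sum_nonneg fun i _ => gfun_nonneg V _ _

lemma chainSum_add (z : ℕ → X) (a b : ℕ) :
    chainSum V z (a + b) = chainSum V z a + chainSum V (fun i => z (a + i)) b := by
  unfold chainSum
  rw [Finset.sum_range_add]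
  rfl

lemma chain_bound (hdiag : ∀ n, Set.diagonal X ⊆ V n)
    (hanti : ∀ ⦃m n : ℕ⦄, n ≤ m → V m ⊆ V n)
    (hcomp : ∀ n, preComp (V (n+1)) (preComp (V (n+1)) (V (n+1))) ⊆ V n)
    (k : ℕ) :
    ∀ (z : ℕ → X) (n : ℕ), 2 * chainSum V z k < (1/2 : ℝ) ^ n →
      gfun V (z 0) (z k) ≤ (1/2 : ℝ) ^ (n + 1) := by
  induction k using Nat.strong_induction_on with
  | _ k ih =>
  intro z n hS
  match k, ih, hS with
  | 0, ih, hS =>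
    rw [gfun_self V hdiag]
    positivity
  | 1, ih, hS =>
    have h1 : chainSum V z 1 = gfun V (z 0) (z 1) := by simp [chainSum]
    have h2 : (1/2:ℝ) ^ (n+1) = (1/2:ℝ)^n * (1/2) := pow_succ _ _
    rw [h1] at hS
    linarith
  | (k+2), ih, hS =>
    classical
    set S := chainSum V z (k+2) with hSdef
    have hS0 : 0 ≤ S := chainSum_nonneg V z (k+2)
    have hpow : (1/2:ℝ) ^ (n+1) = (1/2:ℝ)^n * (1/2) := pow_succ _ _
    have hSlt : S < (1/2:ℝ) ^ (n+1) := by linarith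
    set P : ℕ → Prop := fun m => 2 * chainSum V z m ≤ S with hPdef
    have hP0 : P 0 := by
      simp only [hPdef, chainSum, Finset.range_zero, Finset.sum_empty]
      linarith
    set m := Nat.findGreatest P (k+1) with hmdef
    have hPm : P m := Nat.findGreatest_spec (Nat.zero_le _) hP0
    have hmle : m ≤ k + 1 := Nat.findGreatest_le (k+1)
    -- left piece
    have hleft : gfun V (z 0) (z m) ≤ (1/2:ℝ) ^ (n+1+1) := by
      have hm2 : m < k + 2 := by omega
      refine ih m hm2 z (n+1) ?_
      have := hPm
      simp only [hPdef] at this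
      linarith
    have hpow2 : (1/2:ℝ) ^ (n+1+1) < (1/2:ℝ) ^ (n+1) := by
      rw [pow_succ]
      have : (0:ℝ) < (1/2:ℝ)^(n+1) := by positivity
      linarith
    have hleft' : (z 0, z m) ∈ V (n+1) :=
      mem_of_gfun_lt V hanti (lt_of_le_of_lt hleft hpow2)
    -- middle piece
    have hmidle : gfun V (z m) (z (m+1)) ≤ S := by
      have hsingle : gfun V (z m) (z (m+1)) ≤ ∑ i ∈ Finset.range (k+2), gfun V (z i) (z (i+1)) :=
        Finset.single_le_sum (f := fun i => gfun V (z i) (z (i+1))) (fun i _ => gfun_nonneg V _ _) (Finset.mem_range.2 (show m < k+2 by omega))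
      simpa [hSdef, chainSum] using hsingle
    have hmid' : (z m, z (m+1)) ∈ V (n+1) :=
      mem_of_gfun_lt V hanti (lt_of_le_of_lt hmidle hSlt)
    -- right piece
    have hsplit : S = chainSum V z (m+1) + chainSum V (fun i => z (m+1+i)) (k+1-m) := by
      rw [hSdef, show k + 2 = (m+1) + (k+1-m) by omega, chainSum_add]
    have hT : 2 * chainSum V (fun i => z (m+1+i)) (k+1-m) < (1/2:ℝ) ^ (n+1) := by
      rcases eq_or_lt_of_le hmle with heq | hlt
      · have : k + 1 - m = 0 := by omega
        rw [this]
        have : chainSum V (fun i => z (m+1+i)) 0 = 0 := by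
          simp [chainSum]
        rw [this]
        have hp : (0:ℝ) < (1/2:ℝ)^(n+1) := by positivity
        linarith
      · have hnP : ¬ P (m+1) := Nat.findGreatest_is_greatest (n := k+1) (by omega) (by omega)
        simp only [hPdef, not_le] at hnP
        linarith
    have hright : gfun V (z (m+1)) (z (k+2)) ≤ (1/2:ℝ) ^ (n+1+1) := by
      have := ih (k+1-m) (by omega) (fun i => z (m+1+i)) (n+1) hT
      simp only [Nat.add_zero] at this
      rwa [show m+1+(k+1-m) = k+2 by omega] at this
    have hright' : (z (m+1), z (k+2)) ∈ V (n+1) :=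
      mem_of_gfun_lt V hanti (lt_of_le_of_lt hright hpow2)
    -- compose
    have hmemVn : (z 0, z (k+2)) ∈ V n :=
      hcomp n ⟨z m, hleft', z (m+1), hmid', hright'⟩
    exact gfun_le_of_mem V hmemVn

lemma gfun_le_two_chainSum (hdiag : ∀ n, Set.diagonal X ⊆ V n)
    (hanti : ∀ ⦃m n : ℕ⦄, n ≤ m → V m ⊆ V n)
    (hcomp : ∀ n, preComp (V (n+1)) (preComp (V (n+1)) (V (n+1))) ⊆ V n)
    (z : ℕ → X) (k : ℕ) :
    gfun V (z 0) (z k) ≤ 2 * chainSum V z k := by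
  classical
  set S := chainSum V z k with hSdef
  have hS0 : 0 ≤ S := chainSum_nonneg V z k
  rcases le_or_gt 1 (2 * S) with h | h
  · exact (gfun_le_one V _ _).trans h
  rcases eq_or_lt_of_le hS0 with heq | hpos
  · -- S = 0
    have hz : ∀ n : ℕ, gfun V (z 0) (z k) ≤ (1/2:ℝ) ^ (n+1) := by
      intro n
      refine chain_bound V hdiag hanti hcomp k z n ?_
      have h0 : chainSum V z k = 0 := by rw [← hSdef]; exact heq.symm
      have hp : (0:ℝ) < (1/2:ℝ)^n := by positivity
      rw [h0]; linarith
    have hle : gfun V (z 0) (z k) ≤ 0 := by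
      by_contra hc
      push_neg at hc
      obtain ⟨n, hn⟩ := exists_pow_lt_of_lt_one hc (by norm_num : (1/2:ℝ) < 1)
      have h1 := hz n
      have h2 : (1/2:ℝ) ^ (n+1) ≤ (1/2:ℝ) ^ n :=
        pow_le_pow_of_le_one (by norm_num) (by norm_num) (by omega)
      linarith
    linarith
  · -- 0 < S
    have hex : ∃ n : ℕ, (1/2:ℝ) ^ n ≤ 2 * S := by
      obtain ⟨n, hn⟩ := exists_pow_lt_of_lt_one (by linarith : (0:ℝ) < 2 * S)
        (by norm_num : (1/2:ℝ) < 1)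
      exact ⟨n, hn.le⟩
    set n := Nat.find hex with hndef
    have hn : (1/2:ℝ) ^ n ≤ 2 * S := Nat.find_spec hex
    have hn0 : n ≠ 0 := by
      intro h0
      rw [h0] at hn
      norm_num at hn
      linarith
    have hprev : ¬ (1/2:ℝ) ^ (n-1) ≤ 2 * S := Nat.find_min hex (by omega)
    push_neg at hprev
    have h2 := chain_bound V hdiag hanti hcomp k z (n-1) hprev
    rw [show n - 1 + 1 = n by omega] at h2
    exact h2.trans hn

def chains (a b : X) : Set ℝ :=
  {S | ∃ (k : ℕ) (z : ℕ → X), z 0 = a ∧ z k = b ∧ S = chainSum V z k}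

noncomputable def rho (a b : X) : ℝ := sInf (chains V a b)

lemma gfun_mem_chains (a b : X) : gfun V a b ∈ chains V a b := by
  refine ⟨1, fun i => if i = 0 then a else b, by simp, by simp, ?_⟩
  simp [chainSum]

lemma chains_nonempty (a b : X) : (chains V a b).Nonempty :=
  ⟨_, gfun_mem_chains V a b⟩

lemma chains_nonneg (a b : X) : ∀ S ∈ chains V a b, (0:ℝ) ≤ S := by
  rintro S ⟨k, z, -, -, rfl⟩
  exact chainSum_nonneg V z k

lemma chains_bdd (a b : X) : BddBelow (chains V a b) := ⟨0, chains_nonneg V a b⟩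

lemma rho_nonneg (a b : X) : 0 ≤ rho V a b :=
  le_csInf (chains_nonempty V a b) (chains_nonneg V a b)

lemma rho_le_gfun (a b : X) : rho V a b ≤ gfun V a b :=
  csInf_le (chains_bdd V a b) (gfun_mem_chains V a b)

lemma gfun_le_two_rho (hdiag : ∀ n, Set.diagonal X ⊆ V n)
    (hanti : ∀ ⦃m n : ℕ⦄, n ≤ m → V m ⊆ V n)
    (hcomp : ∀ n, preComp (V (n+1)) (preComp (V (n+1)) (V (n+1))) ⊆ V n)
    (a b : X) : gfun V a b ≤ 2 * rho V a b := by
  have h : gfun V a b / 2 ≤ rho V a b := by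
    refine le_csInf (chains_nonempty V a b) ?_
    rintro S ⟨k, z, h0, hk, rfl⟩
    have := gfun_le_two_chainSum V hdiag hanti hcomp z k
    rw [h0, hk] at this
    linarith
  linarith

lemma rho_self (hdiag : ∀ n, Set.diagonal X ⊆ V n) (a : X) : rho V a a = 0 := by
  refine le_antisymm ?_ (rho_nonneg V a a)
  refine csInf_le (chains_bdd V a a) ⟨0, fun _ => a, rfl, rfl, ?_⟩
  simp [chainSum]

lemma chains_subset_symm (hsymV : ∀ n, preInv (V n) = V n) (a b : X) :
    chains V a b ⊆ chains V b a := by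
  rintro S ⟨k, z, h0, hk, rfl⟩
  refine ⟨k, fun i => z (k - i), by simp [hk], by simp [h0], ?_⟩
  unfold chainSum
  rw [← Finset.sum_range_reflect (fun j => gfun V (z j) (z (j+1))) k]
  refine Finset.sum_congr rfl ?_
  intro i hi
  have hik : i < k := Finset.mem_range.1 hi
  have e1 : k - (i + 1) = k - 1 - i := by omega
  have e2 : k - i = k - 1 - i + 1 := by omega
  simp only []
  rw [e1, e2, gfun_symm V hsymV]

lemma rho_symm (hsymV : ∀ n, preInv (V n) = V n) (a b : X) :
    rho V a b = rho V b a := by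
  unfold rho
  congr 1
  exact le_antisymm (chains_subset_symm V hsymV a b)
    (chains_subset_symm V hsymV b a)

lemma rho_triangle (a b c : X) : rho V a c ≤ rho V a b + rho V b c := by
  have key : ∀ S1 ∈ chains V a b, ∀ S2 ∈ chains V b c, rho V a c ≤ S1 + S2 := by
    rintro S1 ⟨k1, z1, h10, h1k, rfl⟩ S2 ⟨k2, z2, h20, h2k, rfl⟩
    set w : ℕ → X := fun i => if i ≤ k1 then z1 i else z2 (i - k1) with hwdef
    have hw2 : ∀ i, w (k1 + i) = z2 i := by
      intro i
      by_cases hi : i = 0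
      · subst hi
        simp only [hwdef, Nat.add_zero, le_refl, if_pos]
        rw [h1k, h20]
      · have hnot : ¬ (k1 + i ≤ k1) := by omega
        simp only [hwdef, if_neg hnot]
        congr 1
        omega
    have hw1 : ∀ i, i ≤ k1 → w i = z1 i := by
      intro i hi
      simp only [hwdef, if_pos hi]
    refine csInf_le (chains_bdd V a c) ⟨k1 + k2, w, ?_, ?_, ?_⟩
    · rw [hw1 0 (Nat.zero_le _), h10]
    · rw [hw2 k2, h2k]
    · rw [chainSum_add]
      congr 1
      · refine Finset.sum_congr rfl ?_
        intro i hi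
        have hik : i < k1 := Finset.mem_range.1 hi
        rw [hw1 i (by omega), hw1 (i+1) (by omega)]
      · refine Finset.sum_congr rfl ?_
        intro i hi
        simp only []
        rw [hw2 i, hw2 (i+1)]
  have h1 : ∀ S1 ∈ chains V a b, rho V a c - S1 ≤ rho V b c := by
    intro S1 hS1
    refine le_csInf (chains_nonempty V b c) ?_
    intro S2 hS2
    have := key S1 hS1 S2 hS2
    linarith
  have h2 : rho V a c - rho V b c ≤ rho V a b := by
    refine le_csInf (chains_nonempty V a b) ?_
    intro S1 hS1
    have := h1 S1 hS1
    linarith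
  linarith

lemma min_lip (b d : ℝ) : |min 1 b - min 1 d| ≤ |b - d| := by
  have h := abs_min_sub_min_le_max 1 b 1 d
  simpa using h

end

lemma step {X : Type*} {μ : Set (Set (X × X))} (hμ : IsPreUniformity μ)
    (hsym : SymmetricallyPreUniform μ) (hstr : StronglyPreUniform μ) :
    ∀ W ∈ μ, ∃ V', V' ∈ μ ∧ preInv V' = V' ∧
      preComp V' (preComp V' V') ⊆ W ∧ V' ⊆ W := by
  intro W hW
  obtain ⟨A, hA, hAW⟩ := hstr W hW
  obtain ⟨B, hB, hBA⟩ := hstr A hA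
  obtain ⟨V', hV', hVB, hVinv⟩ := hsym B hB
  have hdB : Set.diagonal X ⊆ B := hμ.diag_subset B hB
  have hdA : Set.diagonal X ⊆ A := hμ.diag_subset A hA
  have hVA : V' ⊆ A := fun p hp => hBA ⟨p.1, hdB rfl, hVB hp⟩
  have hVW : V' ⊆ W := fun p hp => hAW ⟨p.1, hdA rfl, hVA hp⟩
  refine ⟨V', hV', hVinv, ?_, hVW⟩
  rintro ⟨a, b⟩ ⟨c, hac, d, hcd, hdb⟩
  exact hAW ⟨d, hBA ⟨c, hVB hac, hVB hcd⟩, hVA hdb⟩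

lemma key {X : Type*} {μ : Set (Set (X × X))} (hμ : IsPreUniformity μ)
    (hsym : SymmetricallyPreUniform μ) (hstr : StronglyPreUniform μ)
    {U : Set (X × X)} (hU : U ∈ μ) (x : X) :
    ∃ f : X → unitInterval,
      (∀ O : Set unitInterval, IsOpen O → f ⁻¹' O ∈ preTop μ) ∧
      f x = 0 ∧ ∀ y, (x, y) ∉ U → f y = 1 := by
  classical
  choose! st h1 h2 h3 h4 using step hμ hsym hstr
  let V : ℕ → Set (X × X) :=
    fun n => Nat.rec (motive := fun _ => Set (X × X)) (st U) (fun _ prev => st prev) n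
  have hVμ : ∀ n, V n ∈ μ := by
    intro n
    induction n with
    | zero => exact h1 U hU
    | succ n ihn => exact h1 _ ihn
  have hsymV : ∀ n, preInv (V n) = V n := by
    intro n
    cases n with
    | zero => exact h2 U hU
    | succ n => exact h2 _ (hVμ n)
  have hcomp : ∀ n, preComp (V (n+1)) (preComp (V (n+1)) (V (n+1))) ⊆ V n :=
    fun n => h3 _ (hVμ n)
  have hsucc : ∀ n, V (n+1) ⊆ V n := fun n => h4 _ (hVμ n)
  have hanti : ∀ ⦃m n : ℕ⦄, n ≤ m → V m ⊆ V n := by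
    intro m n h
    exact antitone_nat_of_succ_le hsucc h
  have hdiag : ∀ n, Set.diagonal X ⊆ V n := fun n => hμ.diag_subset _ (hVμ n)
  have hVU : ∀ n, V n ⊆ U := fun n => (hanti (Nat.zero_le n)).trans (h4 U hU)
  refine ⟨fun y => ⟨min 1 (2 * rho V x y),
    Set.mem_Icc.2 ⟨le_min zero_le_one (by have := rho_nonneg V x y; linarith),
      min_le_left _ _⟩⟩, ?_, ?_, ?_⟩
  · -- pre-continuity
    intro O hO y hy
    simp only [Set.mem_preimage] at hy
    rcases Metric.isOpen_iff.1 hO _ hy with ⟨ε, hε, hball⟩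
    obtain ⟨n, hn⟩ := exists_pow_lt_of_lt_one hε (by norm_num : (1/2:ℝ) < 1)
    refine ⟨V n, hVμ n, fun z hz => ?_⟩
    have hzV : (y, z) ∈ V n := hz
    simp only [Set.mem_preimage]
    apply hball
    rw [Metric.mem_ball, Subtype.dist_eq, Real.dist_eq]
    have hg : gfun V y z ≤ (1/2:ℝ) ^ (n+1) := gfun_le_of_mem V hzV
    have hρ : rho V y z ≤ (1/2:ℝ) ^ (n+1) := (rho_le_gfun V y z).trans hg
    have hρ0 : 0 ≤ rho V y z := rho_nonneg V y z
    have t1 : rho V x z ≤ rho V x y + rho V y z := rho_triangle V x y z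
    have t2 : rho V x y ≤ rho V x z + rho V y z := by
      have h := rho_triangle V x z y
      rwa [rho_symm V hsymV z y] at h
    have habs : |2 * rho V x z - 2 * rho V x y| ≤ 2 * rho V y z := by
      rw [abs_sub_le_iff]
      constructor <;> linarith
    have hlip := min_lip (2 * rho V x z) (2 * rho V x y)
    have hps : (1/2:ℝ) ^ (n+1) = (1/2:ℝ) ^ n * (1/2) := pow_succ _ _
    calc |min 1 (2 * rho V x z) - min 1 (2 * rho V x y)|
        ≤ |2 * rho V x z - 2 * rho V x y| := hlip
      _ ≤ 2 * rho V y z := habs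
      _ < ε := by linarith
  · -- f x = 0
    apply Subtype.ext
    show min 1 (2 * rho V x x) = ((0 : unitInterval) : ℝ)
    rw [rho_self V hdiag]
    norm_num
  · -- f y = 1 on the far set
    intro y hy
    have hnot : ∀ n, (x, y) ∉ V n := fun n h => hy (hVU n h)
    have hg1 : gfun V x y = 1 := gfun_eq_one V hnot
    have h2ρ : (1:ℝ) ≤ 2 * rho V x y := by
      have := gfun_le_two_rho V hdiag hanti hcomp x y
      linarith
    apply Subtype.ext
    show min 1 (2 * rho V x y) = ((1 : unitInterval) : ℝ)
    rw [min_eq_left h2ρ]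
    norm_num

end Statement7Aux

theorem statement7 {X : Type*} (μ : Set (Set (X × X))) (hμ : IsPreUniformity μ)
    (hsym : SymmetricallyPreUniform μ) (hstr : StronglyPreUniform μ) :
    IsCompletelyRegular (preTop μ) := by
  have hmem : ∀ {a b : X}, a ≠ b → ∃ U ∈ μ, (a, b) ∉ U := by
    intro a b hab
    by_contra h
    push_neg at h
    have hd : (a, b) ∈ ⋂₀ μ := fun W hW => h W hW
    rw [hμ.sInter_eq] at hd
    exact hab hd
  constructor
  · -- T1
    intro x y hxy
    have hO : IsOpen {t : unitInterval | (t : ℝ) < 1} :=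
      isOpen_Iio.preimage continuous_subtype_val
    constructor
    · obtain ⟨U, hU, hxyU⟩ := hmem hxy
      obtain ⟨f, hf, hfx, hfar⟩ := Statement7Aux.key hμ hsym hstr hU x
      refine ⟨f ⁻¹' {t : unitInterval | (t : ℝ) < 1}, hf _ hO, ?_, ?_⟩
      · simp only [Set.mem_preimage, Set.mem_setOf_eq, hfx]
        norm_num
      · simp only [Set.mem_preimage, Set.mem_setOf_eq, hfar y hxyU]
        norm_num
    · obtain ⟨U, hU, hxyU⟩ := hmem hxy
      have hU' : preInv U ∈ μ := hμ.inv_mem U hU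
      have hyx : (y, x) ∉ preInv U := fun h => hxyU h
      obtain ⟨f, hf, hfy, hfar⟩ := Statement7Aux.key hμ hsym hstr hU' y
      refine ⟨f ⁻¹' {t : unitInterval | (t : ℝ) < 1}, hf _ hO, ?_, ?_⟩
      · simp only [Set.mem_preimage, Set.mem_setOf_eq, hfy]
        norm_num
      · simp only [Set.mem_preimage, Set.mem_setOf_eq, hfar x hyx]
        norm_num
  · -- complete regularity
    intro x C hC hxC
    obtain ⟨U, hU, hball⟩ := hC x hxC
    obtain ⟨f, hf, hfx, hfar⟩ := Statement7Aux.key hμ hsym hstr hU x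
    exact ⟨f, hf, hfx, fun y hy => hfar y (fun h => (hball h) hy)⟩
end

section
/- Let G be a group equipped with a pre-topology τ such that: (a) (G, τ) is T1; (b) multiplication is pre-continuous, i.e., for all x, y ∈ G and every open W containing xy there exist open sets U ∋ x and V ∋ y with U·V ⊆ W; (c) inversion is pre-continuous, i.e., for every x ∈ G and every open W containing x⁻¹ there is an open U ∋ x with U⁻¹ ⊆ W; (d) there is a neighborhood pre-base ℬ_e at the identity e (a family of open sets containing e such that every open set containing e contains a member of ℬ_e) with B = B⁻¹ for every B ∈ ℬ_e and such that for every U ∈ ℬ_e there exists V ∈ ℬ_e with V·V ⊆ U. Then (G, τ) is a completely regular pre-topological space. -/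
open Set

variable {X : Type*}

open Pointwise

/-!
Urysohn's construction with a chain of neighbourhoods of the identity in place of a normality
argument. Take symmetric basic neighbourhoods `V 0 ⊆ x⁻¹ (G ∖ C)` with `V (n+1) V (n+1) ⊆ V n`,
and build sets `D n k`, `k ≤ 2ⁿ`, increasing in `k`, with `D n 0 = {1}`, `D n 2ⁿ = V 0` and
`D n k · V n ⊆ D n (k+1)`. The function `φ g = inf {k / 2ⁿ : g ∈ D n k}` (capped at `1`) then
satisfies `|φ (g z) - φ g| ≤ 2 / 2ᴺ` for `z ∈ V N`, so `y ↦ φ (x⁻¹ y)` is pre-continuous, vanishes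
at `x` and equals `1` on `C`.
-/

namespace IsPreTopology

variable {X : Type*} {τ : Set (Set X)}

theorem mem_of_forall_exists_subset (hτ : IsPreTopology τ) {P : Set X}
    (h : ∀ u ∈ P, ∃ W ∈ τ, u ∈ W ∧ W ⊆ P) : P ∈ τ := by
  have hP : P = ⋃₀ {W | W ∈ τ ∧ W ⊆ P} := by
    refine Subset.antisymm (fun u hu => ?_) (sUnion_subset fun W hW => hW.2)
    obtain ⟨W, hWτ, huW, hWP⟩ := h u hu
    exact ⟨W, ⟨hWτ, hWP⟩, huW⟩
  rw [hP]
  exact hτ.2 _ fun W hW => hW.1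

theorem preimage_mem_of_forall_dist_lt {Y : Type*} [PseudoMetricSpace Y]
    (hτ : IsPreTopology τ) {f : X → Y}
    (h : ∀ u, ∀ ε > 0, ∃ W ∈ τ, u ∈ W ∧ ∀ w ∈ W, dist (f w) (f u) < ε)
    {O : Set Y} (hO : IsOpen O) : f ⁻¹' O ∈ τ := by
  refine hτ.mem_of_forall_exists_subset fun u hu => ?_
  obtain ⟨ε, hε, hball⟩ := Metric.isOpen_iff.1 hO _ hu
  obtain ⟨W, hWτ, huW, hW⟩ := h u ε hε
  exact ⟨W, hWτ, huW, fun w hw => hball (hW w hw)⟩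

end IsPreTopology

theorem preimage_mul_left_mem {M : Type*} [Mul M] {τ : Set (Set M)} (hτ : IsPreTopology τ)
    (hmul : ∀ x y : M, ∀ W ∈ τ, x * y ∈ W → ∃ V ∈ τ, y ∈ V ∧ ∀ v ∈ V, x * v ∈ W)
    (a : M) {W : Set M} (hW : W ∈ τ) : (a * ·) ⁻¹' W ∈ τ :=
  hτ.mem_of_forall_exists_subset fun y hy => hmul a y W hW hy

theorem exists_seq_mul_self_subset {M : Type*} [Mul M] {ℬ : Set (Set M)}
    (hsq : ∀ U ∈ ℬ, ∃ V ∈ ℬ, ∀ g ∈ V, ∀ h ∈ V, g * h ∈ U) {B : Set M} (hB : B ∈ ℬ) :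
    ∃ V : ℕ → Set M, V 0 = B ∧ (∀ n, V n ∈ ℬ) ∧ ∀ n, V (n + 1) * V (n + 1) ⊆ V n := by
  choose next hnext hnext_mul using hsq
  let step : ℬ → ℬ := fun U => ⟨next U U.2, hnext U U.2⟩
  refine ⟨fun n => (step^[n] ⟨B, hB⟩).1, rfl, fun n => (step^[n] ⟨B, hB⟩).2, fun n => ?_⟩
  rintro _ ⟨g, hg, h, hh, rfl⟩
  simp only [Function.iterate_succ_apply'] at hg hh ⊢
  exact hnext_mul _ _ g hg h hh

theorem exists_le_mul_lt_add (a : ℕ) {b : ℕ} (hb : 0 < b) : ∃ m, a ≤ m * b ∧ m * b < a + b := by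
  have hdiv := Nat.div_add_mod (a + b - 1) b
  have hmod := Nat.mod_lt (a + b - 1) hb
  exact ⟨(a + b - 1) / b, by rw [Nat.mul_comm]; omega⟩

section Dyadic

variable {M : Type*} [Monoid M] (V : ℕ → Set M)

/-- `dyadicSet V n k` plays the role of the open set indexed by `k / 2ⁿ` in Urysohn's lemma:
the binary digits of `k` say which of the `V i` to multiply together. -/
def dyadicSet : ℕ → ℕ → Set M
  | 0, k => if k = 0 then {1} else V 0
  | n + 1, k => if k % 2 = 0 then dyadicSet n (k / 2) else dyadicSet n (k / 2) * V (n + 1)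

@[simp]
theorem dyadicSet_zero_right (n : ℕ) : dyadicSet V n 0 = {1} := by
  induction n with
  | zero => simp [dyadicSet]
  | succ n ih => simp [dyadicSet, ih]

theorem dyadicSet_succ_two_mul (n k : ℕ) : dyadicSet V (n + 1) (2 * k) = dyadicSet V n k := by
  simp [dyadicSet]

theorem dyadicSet_succ_two_mul_add_one (n k : ℕ) :
    dyadicSet V (n + 1) (2 * k + 1) = dyadicSet V n k * V (n + 1) := by
  simp [dyadicSet, show (2 * k + 1) % 2 = 1 by omega, show (2 * k + 1) / 2 = k by omega]

theorem dyadicSet_add_mul_two_pow (n i k : ℕ) :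
    dyadicSet V (n + i) (k * 2 ^ i) = dyadicSet V n k := by
  induction i with
  | zero => simp
  | succ i ih =>
    rw [← add_assoc, show k * 2 ^ (i + 1) = 2 * (k * 2 ^ i) by ring, dyadicSet_succ_two_mul, ih]

theorem dyadicSet_two_pow (n : ℕ) : dyadicSet V n (2 ^ n) = V 0 := by
  simpa [dyadicSet] using dyadicSet_add_mul_two_pow V 0 n 1

variable {V}

theorem dyadicSet_mul_subset (hsq : ∀ n, V (n + 1) * V (n + 1) ⊆ V n) {n k : ℕ}
    (hk : k < 2 ^ n) : dyadicSet V n k * V n ⊆ dyadicSet V n (k + 1) := by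
  induction n generalizing k with
  | zero => simp [dyadicSet, show k = 0 by simpa using hk]
  | succ n ih =>
    obtain ⟨j, rfl | rfl⟩ := Nat.even_or_odd' k
    · rw [dyadicSet_succ_two_mul, dyadicSet_succ_two_mul_add_one]
    · rw [dyadicSet_succ_two_mul_add_one, show 2 * j + 1 + 1 = 2 * (j + 1) by ring,
        dyadicSet_succ_two_mul, mul_assoc]
      calc dyadicSet V n j * (V (n + 1) * V (n + 1)) ⊆ dyadicSet V n j * V n :=
            mul_subset_mul_left (hsq n)
        _ ⊆ dyadicSet V n (j + 1) := ih (by rw [pow_succ] at hk; omega)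

theorem dyadicSet_mono (h1 : ∀ n, (1 : M) ∈ V n) (hsq : ∀ n, V (n + 1) * V (n + 1) ⊆ V n)
    {n k l : ℕ} (hkl : k ≤ l) (hl : l ≤ 2 ^ n) : dyadicSet V n k ⊆ dyadicSet V n l := by
  induction l, hkl using Nat.le_induction with
  | base => rfl
  | succ l _ ih =>
    refine (ih (by omega)).trans fun g hg => ?_
    simpa using dyadicSet_mul_subset hsq (by omega) (mul_mem_mul hg (h1 n))

theorem exists_dyadicSet_of_mem (h1 : ∀ n, (1 : M) ∈ V n)
    (hsq : ∀ n, V (n + 1) * V (n + 1) ⊆ V n) {g : M} {n k : ℕ} (hk : k ≤ 2 ^ n)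
    (hg : g ∈ dyadicSet V n k) (N : ℕ) :
    ∃ m ≤ 2 ^ N, g ∈ dyadicSet V N m ∧ m * 2 ^ n < k * 2 ^ N + 2 ^ n := by
  -- `m` is `⌈k 2ᴺ / 2ⁿ⌉`; both levels are compared at level `n + N`.
  obtain ⟨m, hkm, hmk⟩ := exists_le_mul_lt_add (k * 2 ^ N) (Nat.two_pow_pos n)
  have hm : m ≤ 2 ^ N := by
    have : m * 2 ^ n < (2 ^ N + 1) * 2 ^ n := by nlinarith [Nat.mul_le_mul_right (2 ^ N) hk]
    exact Nat.lt_succ_iff.1 (Nat.lt_of_mul_lt_mul_right this)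
  refine ⟨m, hm, ?_, hmk⟩
  rw [← dyadicSet_add_mul_two_pow V N n m, add_comm]
  rw [← dyadicSet_add_mul_two_pow V n N k] at hg
  exact dyadicSet_mono h1 hsq hkm (by rw [pow_add, mul_comm (2 ^ n)]; gcongr) hg

variable (V)

/-- Urysohn's function of the chain `V`; the value `1` is inserted so that elements outside
`V 0`, which lie in no `dyadicSet V n k` with `k ≤ 2ⁿ`, get the value `1` rather than the junk
value `sInf ∅ = 0`. -/
noncomputable def dyadicLevel (g : M) : ℝ :=
  sInf (insert 1 {r | ∃ n k : ℕ, k ≤ 2 ^ n ∧ g ∈ dyadicSet V n k ∧ r = k / 2 ^ n})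

variable {V}

theorem dyadicLevel_le {g : M} {n k : ℕ} (hk : k ≤ 2 ^ n) (hg : g ∈ dyadicSet V n k) :
    dyadicLevel V g ≤ k / 2 ^ n :=
  csInf_le ⟨0, by rintro _ (rfl | ⟨n, k, -, -, rfl⟩) <;> positivity⟩
    (mem_insert_of_mem _ ⟨n, k, hk, hg, rfl⟩)

theorem dyadicLevel_le_one (g : M) : dyadicLevel V g ≤ 1 :=
  csInf_le ⟨0, by rintro _ (rfl | ⟨n, k, -, -, rfl⟩) <;> positivity⟩ (mem_insert _ _)

theorem le_dyadicLevel {g : M} {a : ℝ} (ha : a ≤ 1)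
    (h : ∀ n k : ℕ, k ≤ 2 ^ n → g ∈ dyadicSet V n k → a ≤ k / 2 ^ n) : a ≤ dyadicLevel V g :=
  le_csInf (insert_nonempty _ _) <| by
    rintro _ (rfl | ⟨n, k, hk, hg, rfl⟩)
    exacts [ha, h n k hk hg]

theorem dyadicLevel_nonneg (g : M) : 0 ≤ dyadicLevel V g :=
  le_dyadicLevel zero_le_one fun _ _ _ _ => by positivity

theorem dyadicLevel_one : dyadicLevel V (1 : M) = 0 := by
  refine le_antisymm ?_ (dyadicLevel_nonneg 1)
  simpa using dyadicLevel_le (V := V) (n := 0) (k := 0) (Nat.zero_le _) (by simp)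

theorem dyadicLevel_eq_one_of_notMem (h1 : ∀ n, (1 : M) ∈ V n)
    (hsq : ∀ n, V (n + 1) * V (n + 1) ⊆ V n) {g : M} (hg : g ∉ V 0) : dyadicLevel V g = 1 := by
  refine (dyadicLevel_le_one g).antisymm (le_dyadicLevel le_rfl fun n k hk hgk => ?_)
  rw [← dyadicSet_two_pow V n] at hg
  exact absurd (dyadicSet_mono h1 hsq hk le_rfl hgk) hg

theorem dyadicLevel_mul_le_of_mem (hsq : ∀ n, V (n + 1) * V (n + 1) ⊆ V n) {g z : M}
    {N m : ℕ} (hm : m ≤ 2 ^ N) (hg : g ∈ dyadicSet V N m) (hz : z ∈ V N) :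
    dyadicLevel V (g * z) ≤ (m + 1) / 2 ^ N := by
  rcases hm.lt_or_eq with hm | rfl
  · exact_mod_cast dyadicLevel_le hm (dyadicSet_mul_subset hsq hm (mul_mem_mul hg hz))
  · calc dyadicLevel V (g * z) ≤ 1 := dyadicLevel_le_one _
      _ ≤ ((2 ^ N : ℕ) + 1 : ℝ) / 2 ^ N := by
        push_cast
        rw [le_div_iff₀ (by positivity)]
        linarith

theorem dyadicLevel_mul_le (h1 : ∀ n, (1 : M) ∈ V n) (hsq : ∀ n, V (n + 1) * V (n + 1) ⊆ V n)
    (g : M) {z : M} {N : ℕ} (hz : z ∈ V N) :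
    dyadicLevel V (g * z) ≤ dyadicLevel V g + 2 / 2 ^ N := by
  rw [← sub_le_iff_le_add]
  refine le_dyadicLevel (by linarith [dyadicLevel_le_one (V := V) (g * z),
    show (0 : ℝ) ≤ 2 / 2 ^ N by positivity]) fun n k hk hgk => ?_
  obtain ⟨m, hm, hgm, hmk⟩ := exists_dyadicSet_of_mem h1 hsq hk hgk N
  have hmk' : (m : ℝ) * 2 ^ n < k * 2 ^ N + 2 ^ n := by exact_mod_cast hmk
  have hlevel := dyadicLevel_mul_le_of_mem hsq hm hgm hz
  rw [sub_le_iff_le_add]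
  refine hlevel.trans ?_
  rw [div_add_div _ _ (by positivity) (by positivity), div_le_div_iff₀ (by positivity)
    (by positivity)]
  nlinarith [show (0 : ℝ) < 2 ^ N by positivity]

end Dyadic

theorem abs_dyadicLevel_mul_sub_le {G : Type*} [Group G] {V : ℕ → Set G}
    (h1 : ∀ n, (1 : G) ∈ V n) (hsq : ∀ n, V (n + 1) * V (n + 1) ⊆ V n)
    (g : G) {z : G} {N : ℕ} (hz : z ∈ V N) (hz' : z⁻¹ ∈ V N) :
    |dyadicLevel V (g * z) - dyadicLevel V g| ≤ 2 / 2 ^ N := by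
  have h := dyadicLevel_mul_le h1 hsq (g * z) hz'
  rw [mul_inv_cancel_right] at h
  rw [abs_le]
  constructor <;> linarith [dyadicLevel_mul_le h1 hsq g hz]

theorem statement13_general {G : Type*} [Group G] (τ : Set (Set G))
    (hτ : IsPreTopology τ)
    (hT1 : IsT1 τ)
    (hmul : ∀ x y : G, ∀ W ∈ τ, x * y ∈ W →
      ∃ U ∈ τ, ∃ V ∈ τ, x ∈ U ∧ y ∈ V ∧ ∀ u ∈ U, ∀ v ∈ V, u * v ∈ W)
    (ℬe : Set (Set G))
    (hb_open : ∀ B ∈ ℬe, B ∈ τ ∧ (1 : G) ∈ B ∧ ∀ g ∈ B, g⁻¹ ∈ B)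
    (hb_base : ∀ O ∈ τ, (1 : G) ∈ O → ∃ B ∈ ℬe, B ⊆ O)
    (hb_sq : ∀ U ∈ ℬe, ∃ V ∈ ℬe, ∀ g ∈ V, ∀ h ∈ V, g * h ∈ U) :
    IsCompletelyRegular τ := by
  have htrans : ∀ (a : G) {W}, W ∈ τ → (a * ·) ⁻¹' W ∈ τ := preimage_mul_left_mem hτ
    fun x y W hW hxy => by
      obtain ⟨U, -, V, hV, hxU, hyV, hUV⟩ := hmul x y W hW hxy
      exact ⟨V, hV, hyV, fun v hv => hUV x hxU v hv⟩
  refine ⟨hT1, fun x C hC hxC => ?_⟩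
  obtain ⟨B, hBℬ, hBC⟩ := hb_base _ (htrans x hC) (by simpa using hxC)
  obtain ⟨V, rfl, hVℬ, hsq⟩ := exists_seq_mul_self_subset hb_sq hBℬ
  have hV n := hb_open _ (hVℬ n)
  have h1 n : (1 : G) ∈ V n := (hV n).2.1
  refine ⟨fun y => ⟨dyadicLevel V (x⁻¹ * y), dyadicLevel_nonneg _, dyadicLevel_le_one _⟩,
    fun O hO => hτ.preimage_mem_of_forall_dist_lt (fun u ε hε => ?_) hO,
    by simp [dyadicLevel_one],
    fun y hy => Subtype.ext (dyadicLevel_eq_one_of_notMem h1 hsq fun h => hBC h (by simpa))⟩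
  obtain ⟨N, hN⟩ := exists_pow_lt_of_lt_one (half_pos hε) one_half_lt_one
  refine ⟨(u⁻¹ * ·) ⁻¹' V N, htrans _ (hV N).1, by simpa using h1 N,
    fun w hw => ?_⟩
  have hdist := abs_dyadicLevel_mul_sub_le h1 hsq (x⁻¹ * u) hw ((hV N).2.2 _ hw)
  rw [mul_assoc, mul_inv_cancel_left] at hdist
  rw [Subtype.dist_eq, Real.dist_eq]
  refine hdist.trans_lt ?_
  rw [div_eq_mul_one_div, ← one_div_pow]
  linarith

theorem statement13 {G : Type*} [Group G] (τ : Set (Set G))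
    (hτ : IsPreTopology τ)
    (hT1 : IsT1 τ)
    (hmul : ∀ x y : G, ∀ W ∈ τ, x * y ∈ W →
      ∃ U ∈ τ, ∃ V ∈ τ, x ∈ U ∧ y ∈ V ∧ ∀ u ∈ U, ∀ v ∈ V, u * v ∈ W)
    (hinv : ∀ x : G, ∀ W ∈ τ, x⁻¹ ∈ W → ∃ U ∈ τ, x ∈ U ∧ ∀ u ∈ U, u⁻¹ ∈ W)
    (ℬe : Set (Set G))
    (hb_open : ∀ B ∈ ℬe, B ∈ τ ∧ (1 : G) ∈ B ∧ ∀ g ∈ B, g⁻¹ ∈ B)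
    (hb_base : ∀ O ∈ τ, (1 : G) ∈ O → ∃ B ∈ ℬe, B ⊆ O)
    (hb_sq : ∀ U ∈ ℬe, ∃ V ∈ ℬe, ∀ g ∈ V, ∀ h ∈ V, g * h ∈ U) :
    IsCompletelyRegular τ :=
  statement13_general τ hτ hT1 hmul ℬe hb_open hb_base hb_sq
end

section
/- Let δ be a pre-proximity on a nonempty set X. For A, B ⊆ X put T(A, B) = (X × X) ∖ (A × B), and let μ_δ = {U ⊆ X × X : T(A, B) ⊆ U for some A, B ⊆ X with A δ̄ B}. Then: (i) μ_δ is a pre-uniformity on X; (ii) μ_δ is totally bounded; (iii) μ_δ is compatible with δ, i.e., for all A, B ⊆ X, A δ B holds if and only if V ∩ (A × B) ≠ ∅ for every V ∈ μ_δ; (iv) μ_δ is the coarsest pre-uniformity compatible with δ: if ν is a pre-uniformity on X with δ_ν = δ (where A δ_ν B iff every V ∈ ν meets A × B), then μ_δ ⊆ ν. -/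
open Set

variable {X : Type*}

theorem statement18 {X : Type*} [Nonempty X] (δ : Set X → Set X → Prop)
    (hδ : IsPreProximity δ) :
    IsPreUniformity (proxUnif δ) ∧
    TotallyBoundedPU (proxUnif δ) ∧
    (∀ A B : Set X, δ A B ↔ ∀ V ∈ proxUnif δ, (V ∩ A ×ˢ B).Nonempty) ∧
    (∀ ν : Set (Set (X × X)), IsPreUniformity ν →
      (∀ A B : Set X, δ A B ↔ ∀ V ∈ ν, (V ∩ A ×ˢ B).Nonempty) → proxUnif δ ⊆ ν) := by

  obtain ⟨hsymm, hmono, hpoint, hne, hsep⟩ := hδ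
  have hmono' : ∀ A B C : Set X, δ A B → A ⊆ C → δ C B := fun A B C h hAC =>
    (hsymm _ _).mp (hmono _ _ _ ((hsymm _ _).mp h) hAC)
  have hnotmem : ∀ A B : Set X, ¬ δ A B → ∀ x, x ∈ A → x ∉ B := by
    intro A B h x hxA hxB
    exact h (hmono' _ _ _ (hmono _ _ _ ((hpoint x x).mpr rfl)
      (singleton_subset_iff.mpr hxB)) (singleton_subset_iff.mpr hxA))
  have hemptyB : ∀ B : Set X, ¬ δ ∅ B := fun B h => hne (hmono _ _ _ h (subset_univ B))
  have hPU : IsPreUniformity (proxUnif δ) := by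
    constructor
    · rintro U ⟨A, B, hAB, hsub⟩ ⟨x, y⟩ hxy
      have hxy' : x = y := hxy
      subst hxy'
      apply hsub
      rintro ⟨hx, hy⟩
      exact hnotmem A B hAB x hx hy
    · rintro U ⟨A, B, hAB, hsub⟩
      refine ⟨B, A, fun h => hAB ((hsymm _ _).mp h), ?_⟩
      rintro ⟨x, y⟩ hp
      apply hsub
      rintro ⟨h1, h2⟩
      exact hp ⟨h2, h1⟩
    · rintro U ⟨A, B, hAB, hsub⟩
      obtain ⟨C, hAC, hBC⟩ := hsep A B hAB
      refine ⟨(A ×ˢ C)ᶜ, ⟨A, C, hAC, le_refl _⟩, (Cᶜ ×ˢ B)ᶜ,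
        ⟨Cᶜ, B, fun h => hBC ((hsymm _ _).mp h), le_refl _⟩, ?_⟩
      rintro ⟨x, y⟩ ⟨z, hz1, hz2⟩
      apply hsub
      rintro ⟨hx, hy⟩
      by_cases hzC : z ∈ C
      · exact hz1 ⟨hx, hzC⟩
      · exact hz2 ⟨hzC, hy⟩
    · rintro U ⟨A, B, hAB, hsub⟩ V hUV
      exact ⟨A, B, hAB, hsub.trans hUV⟩
    · apply Set.Subset.antisymm
      · rintro ⟨x, y⟩ hp
        by_contra hxy
        have hne' : ¬ δ {x} {y} := fun h => hxy ((hpoint x y).mp h)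
        have : (x, y) ∈ (({x} : Set X) ×ˢ ({y} : Set X))ᶜ :=
          hp _ ⟨{x}, {y}, hne', le_refl _⟩
        exact this ⟨rfl, rfl⟩
      · intro p hp U hU
        obtain ⟨A, B, hAB, hsub⟩ := hU
        have hp' : p.1 = p.2 := hp
        apply hsub
        rintro ⟨h1, h2⟩
        exact hnotmem A B hAB p.1 h1 (hp' ▸ h2)
  refine ⟨hPU, ?_, ?_, ?_⟩
  · rintro U ⟨A, B, hAB, hsub⟩
    rcases A.eq_empty_or_nonempty with hA | ⟨a, ha⟩
    · obtain ⟨y₀⟩ : Nonempty X := inferInstance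
      refine ⟨{y₀}, finite_singleton _, fun x => ⟨y₀, rfl, hsub ?_⟩⟩
      rintro ⟨h1, _⟩
      rw [hA] at h1
      exact h1
    · refine ⟨{a}, finite_singleton _, fun x => ⟨a, rfl, hsub ?_⟩⟩
      rintro ⟨_, h2⟩
      exact hnotmem A B hAB a ha h2
  · intro A B
    constructor
    · rintro hAB V ⟨C, D, hCD, hsub⟩
      by_contra hemp
      rw [Set.not_nonempty_iff_eq_empty] at hemp
      have hABsub : A ×ˢ B ⊆ C ×ˢ D := by
        intro p hp
        by_contra hpCD
        have : p ∈ V ∩ A ×ˢ B := ⟨hsub hpCD, hp⟩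
        rw [hemp] at this
        exact this
      rcases A.eq_empty_or_nonempty with hA | ⟨a, ha⟩
      · exact hemptyB B (hA ▸ hAB)
      rcases B.eq_empty_or_nonempty with hB | ⟨b, hb⟩
      · exact hemptyB A ((hsymm _ _).mp (hB ▸ hAB))
      have hAC : A ⊆ C := fun x hx => (hABsub (show ((x, b) : X × X) ∈ A ×ˢ B from ⟨hx, hb⟩)).1
      have hBD : B ⊆ D := fun y hy => (hABsub (show ((a, y) : X × X) ∈ A ×ˢ B from ⟨ha, hy⟩)).2
      exact hCD (hmono' _ _ _ (hmono _ _ _ hAB hBD) hAC)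
    · intro h
      by_contra hAB
      obtain ⟨p, hpV, hpAB⟩ := h ((A ×ˢ B)ᶜ) ⟨A, B, hAB, le_refl _⟩
      exact hpV hpAB
  · rintro ν hν hcompat U ⟨A, B, hAB, hsub⟩
    have : ¬ ∀ V ∈ ν, (V ∩ A ×ˢ B).Nonempty := fun h => hAB ((hcompat A B).mpr h)
    push_neg at this
    obtain ⟨V, hV, hVemp⟩ := this
    rw [← Set.not_nonempty_iff_eq_empty] at hVemp
    have hVsub : V ⊆ U := by
      intro p hp
      apply hsub
      intro hpAB
      exact hVemp ⟨p, hp, hpAB⟩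
    exact hν.superset_mem V hV U hVsub
end
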